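/- Conditional on both the induced degree sequence d' (with total degree 2k) and on the set C of surviving points, the perfect matching realized on C after independent edge-deletion from a uniformly random perfect matching on 2M points is uniformly distributed: each perfect matching on C has probability k!·2^k/(2k)!. -/

import Mathlib

open scoped Classical BigOperators

/-- Probability weight of a retention pattern `g` on potential edges:
each unordered pair is independently retained (`true`) with probability `p`. -/
noncomputable def edgeWeight {α : Type*} [Fintype α] [DecidableEq α]
    (p : ℝ) (g : Sym2 α → Bool) : ℝ :=
  ∏ e : Sym2 α, if g e then p else 1 - p

/-- The set of points whose matching edge survives the retention pattern `g`. -/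
noncomputable def survivors {α : Type*} [Fintype α] [DecidableEq α]
    (f : α → α) (g : Sym2 α → Bool) : Finset α :=
  Finset.univ.filter fun x => g s(x, f x) = true

section Aux

set_option linter.unusedSectionVars false

variable {α : Type*} [Fintype α] [DecidableEq α]

def PM (A : Finset α) (m : α → α) : Prop :=
  (∀ x ∈ A, m x ∈ A ∧ m x ≠ x ∧ m (m x) = x) ∧ ∀ x ∉ A, m x = x

noncomputable def matchCount (A : Finset α) : ℕ :=
  Fintype.card {m : α → α // PM A m}

lemma PM.forward {A : Finset α} {m : α → α} (hm : PM A m) (a : α) (ha : a ∈ A) :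
    PM ((A.erase a).erase (m a)) (fun x => if x = a ∨ x = m a then x else m x) := by
  constructor
  · intro x hx
    rw [Finset.mem_erase, Finset.mem_erase] at hx
    obtain ⟨hxma, hxa, hxA⟩ := hx
    have hmx := hm.1 x hxA
    have h1 : m x ≠ a := fun h => hxma (by rw [← hmx.2.2, h])
    have h2 : m x ≠ m a := fun h => hxa (by rw [← hmx.2.2, h, (hm.1 a ha).2.2])
    have hne : ¬ (x = a ∨ x = m a) := by tauto
    have hne2 : ¬ (m x = a ∨ m x = m a) := by tauto
    refine ⟨?_, ?_, ?_⟩ <;> simp only [if_neg hne, if_neg hne2]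
    · exact Finset.mem_erase.mpr ⟨h2, Finset.mem_erase.mpr ⟨h1, hmx.1⟩⟩
    · exact hmx.2.1
    · exact hmx.2.2
  · intro x hx
    by_cases h : x = a ∨ x = m a
    · simp [h]
    · have hxA : x ∉ A := by
        intro hxA
        exact hx (by rw [Finset.mem_erase, Finset.mem_erase]; tauto)
      simp [h, hm.2 x hxA]

lemma PM.backward {A : Finset α} {a b : α} (ha : a ∈ A) (hb : b ∈ A.erase a)
    {m : α → α} (hm : PM ((A.erase a).erase b) m) :
    PM A (fun x => if x = a then b else if x = b then a else m x) := by
  obtain ⟨hbne, hbA⟩ := Finset.mem_erase.mp hb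
  have hma : a ∉ (A.erase a).erase b := by simp
  have hmb : b ∉ (A.erase a).erase b := by simp
  constructor
  · intro x hxA
    by_cases h1 : x = a
    · simp [h1, hbne, hbA]
    · by_cases h2 : x = b
      · simp [h1, h2, hbne, hbne.symm, ha]
      · have hx' : x ∈ (A.erase a).erase b := by
          rw [Finset.mem_erase, Finset.mem_erase]; exact ⟨h2, h1, hxA⟩
        have hmx := hm.1 x hx'
        have hmxb : m x ≠ b := fun h => hmb (h ▸ hmx.1)
        have hmxa : m x ≠ a := fun h => hma (h ▸ hmx.1)
        have hmxA : m x ∈ A := by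
          have := hmx.1
          rw [Finset.mem_erase, Finset.mem_erase] at this
          exact this.2.2
        simp only [if_neg h1, if_neg h2, if_neg hmxa, if_neg hmxb]
        exact ⟨hmxA, hmx.2.1, hmx.2.2⟩
  · intro x hxA
    have h1 : x ≠ a := fun h => hxA (h ▸ ha)
    have h2 : x ≠ b := fun h => hxA (h ▸ hbA)
    have hx' : x ∉ (A.erase a).erase b := fun h => hxA (by
      rw [Finset.mem_erase, Finset.mem_erase] at h; exact h.2.2)
    simp [h1, h2, hm.2 x hx']

lemma matchCount_step (A : Finset α) (a : α) (ha : a ∈ A) :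
    matchCount A = ∑ b ∈ A.erase a, matchCount ((A.erase a).erase b) := by
  have h0 : matchCount A = (Finset.univ.filter (PM (α := α) A)).card := by
    rw [matchCount, Fintype.card_subtype]
  rw [h0]
  rw [Finset.card_eq_sum_card_fiberwise (f := fun m => m a) (t := A.erase a)
    (fun m hm => by
      rw [Finset.mem_coe, Finset.mem_filter] at hm
      exact Finset.mem_erase.mpr ⟨(hm.2.1 a ha).2.1, (hm.2.1 a ha).1⟩)]
  refine Finset.sum_congr rfl fun b hb => ?_
  obtain ⟨hbne, hbA⟩ := Finset.mem_erase.mp hb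
  rw [matchCount, Fintype.card_subtype]
  refine Finset.card_bij' (fun m _ => fun x => if x = a ∨ x = b then x else m x)
    (fun m _ => fun x => if x = a then b else if x = b then a else m x) ?_ ?_ ?_ ?_
  · intro m hm
    simp only [Finset.mem_filter, Finset.mem_univ, true_and] at hm ⊢
    rw [← hm.2]
    exact hm.1.forward a ha
  · intro m hm
    simp only [Finset.mem_filter, Finset.mem_univ, true_and] at hm ⊢
    exact ⟨PM.backward ha hb hm, by simp⟩
  · intro m hm
    simp only [Finset.mem_filter, Finset.mem_univ, true_and] at hm
    obtain ⟨hPM, hma⟩ := hm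
    funext x
    show (if x = a then b else if x = b then a
      else if x = a ∨ x = b then x else m x) = m x
    by_cases h1 : x = a
    · simp [h1, hma.symm]
    · by_cases h2 : x = b
      · have : m b = a := by rw [← hma, (hPM.1 a ha).2.2]
        simp [h1, h2, this.symm]
      · have : ¬ (x = a ∨ x = b) := by tauto
        simp [h1, h2, this]
  · intro m hm
    simp only [Finset.mem_filter, Finset.mem_univ, true_and] at hm
    funext x
    show (if x = a ∨ x = b then x
      else if x = a then b else if x = b then a else m x) = m x
    by_cases h : x = a ∨ x = b
    · rw [if_pos h]
      rcases h with h | h <;> rw [h]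
      · exact (hm.2 a (by simp)).symm
      · exact (hm.2 b (by simp)).symm
    · push_neg at h
      simp [h.1, h.2]

lemma matchCount_spec : ∀ (k : ℕ) (A : Finset α), A.card = 2 * k →
    matchCount A * (k.factorial * 2 ^ k) = (2 * k).factorial := by
  intro k
  induction k with
  | zero =>
    intro A hA
    have hAe : A = ∅ := Finset.card_eq_zero.mp hA
    subst hAe
    have h1 : matchCount (∅ : Finset α) = 1 := by
      rw [matchCount, Fintype.card_eq_one_iff]
      refine ⟨⟨id, ⟨fun x hx => absurd hx (Finset.notMem_empty x), fun x _ => rfl⟩⟩, ?_⟩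
      rintro ⟨m, hm⟩
      ext x
      exact hm.2 x (Finset.notMem_empty x)
    simp [h1]
  | succ k ih =>
    intro A hA
    have hpos : 0 < A.card := by omega
    obtain ⟨a, ha⟩ := Finset.card_pos.mp hpos
    rw [matchCount_step A a ha]
    have hcard : (A.erase a).card = 2 * k + 1 := by
      rw [Finset.card_erase_of_mem ha, hA]
      omega
    have hsum : ∀ b ∈ A.erase a,
        matchCount ((A.erase a).erase b) * (k.factorial * 2 ^ k) = (2 * k).factorial := by
      intro b hb
      refine ih _ ?_
      rw [Finset.card_erase_of_mem hb, hcard]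
      omega
    calc (∑ b ∈ A.erase a, matchCount ((A.erase a).erase b)) *
          ((k + 1).factorial * 2 ^ (k + 1))
        = ∑ b ∈ A.erase a, (matchCount ((A.erase a).erase b) * (k.factorial * 2 ^ k))
            * ((k+1) * 2) := by
          rw [Finset.sum_mul, Nat.factorial_succ]
          refine Finset.sum_congr rfl fun b _ => ?_
          ring
      _ = ∑ b ∈ A.erase a, (2 * k).factorial * ((k+1) * 2) := by
          refine Finset.sum_congr rfl fun b hb => by rw [hsum b hb]
      _ = (2 * k + 1) * ((2 * k).factorial * ((k+1) * 2)) := by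
          rw [Finset.sum_const, hcard, smul_eq_mul]
      _ = (2 * (k + 1)).factorial := by
          have h2 : 2 * (k + 1) = (2 * k + 1) + 1 := by ring
          rw [h2, Nat.factorial_succ, Nat.factorial_succ]
          ring

lemma survivors_eq_iff (A : Finset α) (f : α → α) (g : Sym2 α → Bool) :
    survivors f g = A ↔ ∀ x, (g (s(x, f x)) = true ↔ x ∈ A) := by
  constructor
  · intro h x
    rw [← h, survivors, Finset.mem_filter]
    simp
  · intro h
    ext x
    rw [survivors, Finset.mem_filter]
    simp [h x]

lemma survivors_mapsto {A : Finset α} {f : α → α} {g : Sym2 α → Bool}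
    (hf : Function.Involutive f) (h : survivors f g = A) :
    ∀ x ∈ A, f x ∈ A := by
  intro x hx
  rw [survivors_eq_iff] at h
  rw [← h (f x)]
  have : s(f x, f (f x)) = s(x, f x) := by
    rw [hf x, Sym2.eq_swap]
  rw [this, h x]
  exact hx

lemma edgeWeight_nonneg {p : ℝ} (hp : p ∈ Set.Ioo (0:ℝ) 1) (g : Sym2 α → Bool) :
    0 ≤ edgeWeight p g := by
  refine Finset.prod_nonneg fun e _ => ?_
  obtain ⟨h0, h1⟩ := hp
  by_cases h : g e <;> simp [h] <;> linarith

lemma sval_sq {p : ℝ} {A : Finset α} {f : α → α}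
    (hf : Function.Involutive f) (hff : ∀ x, f x ≠ x) (hfA : ∀ x ∈ A, f x ∈ A) :
    (∑ g : Sym2 α → Bool, edgeWeight p g * (if survivors f g = A then 1 else 0)) ^ 2
      = ∏ x : α, (if x ∈ A then p else 1 - p) := by
  set T : Finset (Sym2 α) := Finset.univ.image (fun x => s(x, f x)) with hT
  set χ : Sym2 α → Bool := fun e => decide (∃ x ∈ A, e = s(x, f x)) with hχ
  have hchi : ∀ x : α, (χ (s(x, f x)) = true ↔ x ∈ A) := by
    intro x
    rw [hχ]
    simp only [decide_eq_true_eq]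
    constructor
    · rintro ⟨y, hy, heq⟩
      rw [Sym2.eq_iff] at heq
      rcases heq with ⟨h1, -⟩ | ⟨h1, h2⟩
      · exact h1 ▸ hy
      · exact h1 ▸ hfA y hy
    · intro hx
      exact ⟨x, hx, rfl⟩
  set W : Sym2 α → ℝ := fun e => if χ e then p else 1 - p with hW
  -- step 1: the sum equals ∏ e in T, W e
  have hstep1 : (∑ g : Sym2 α → Bool, edgeWeight p g * (if survivors f g = A then 1 else 0))
      = ∏ e ∈ T, W e := by
    have hind : ∀ g : Sym2 α → Bool, (if survivors f g = A then (1:ℝ) else 0)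
        = ∏ e : Sym2 α, (if e ∈ T then (if g e = χ e then (1:ℝ) else 0) else 1) := by
      intro g
      by_cases hs : survivors f g = A
      · rw [if_pos hs]
        refine (Finset.prod_eq_one fun e _ => ?_).symm
        by_cases heT : e ∈ T
        · rw [if_pos heT]
          obtain ⟨x, -, rfl⟩ := Finset.mem_image.mp heT
          rw [survivors_eq_iff] at hs
          have : g (s(x, f x)) = χ (s(x, f x)) := by
            rw [Bool.eq_iff_iff, hs x, hchi x]
          rw [if_pos this]
        · rw [if_neg heT]
      · rw [if_neg hs]
        have : ∃ x, g (s(x, f x)) ≠ χ (s(x, f x)) := by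
          by_contra hc
          push_neg at hc
          apply hs
          rw [survivors_eq_iff]
          intro x
          rw [hc x, hchi x]
        obtain ⟨x, hx⟩ := this
        refine (Finset.prod_eq_zero (Finset.mem_univ (s(x, f x))) ?_).symm
        rw [if_pos (Finset.mem_image.mpr ⟨x, Finset.mem_univ x, rfl⟩), if_neg hx]
    calc (∑ g : Sym2 α → Bool, edgeWeight p g * (if survivors f g = A then 1 else 0))
        = ∑ g : Sym2 α → Bool, ∏ e : Sym2 α,
            ((if g e then p else 1 - p) * (if e ∈ T then (if g e = χ e then (1:ℝ) else 0) else 1)) := by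
          refine Finset.sum_congr rfl fun g _ => ?_
          rw [hind g, edgeWeight, ← Finset.prod_mul_distrib]
      _ = ∑ g ∈ Fintype.piFinset (fun _ : Sym2 α => (Finset.univ : Finset Bool)), ∏ e : Sym2 α,
            ((if g e then p else 1 - p) * (if e ∈ T then (if g e = χ e then (1:ℝ) else 0) else 1)) := by
          rw [Fintype.piFinset_univ]
      _ = ∏ e : Sym2 α, ∑ b : Bool,
            ((if b then p else 1 - p) * (if e ∈ T then (if b = χ e then (1:ℝ) else 0) else 1)) := by
          rw [Finset.prod_univ_sum]
      _ = ∏ e : Sym2 α, (if e ∈ T then W e else 1) := by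
          refine Finset.prod_congr rfl fun e _ => ?_
          rw [Fintype.sum_bool]
          by_cases heT : e ∈ T
          · rcases Bool.dichotomy (χ e) with h | h <;> simp [heT, h, hW] <;> ring
          · simp [heT]
      _ = ∏ e ∈ T, W e := by
          rw [← Finset.prod_filter, Finset.filter_univ_mem]
  rw [hstep1]
  -- step 2: fiberwise product
  have hfiber : ∀ y : α, Finset.univ.filter (fun x => s(x, f x) = s(y, f y))
      = {y, f y} := by
    intro y
    ext x
    simp only [Finset.mem_filter, Finset.mem_univ, true_and, Finset.mem_insert,
      Finset.mem_singleton]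
    constructor
    · intro h
      rw [Sym2.eq_iff] at h
      tauto
    · rintro (rfl | rfl)
      · rfl
      · rw [hf y, Sym2.eq_swap]
  have hmaps : ∀ x ∈ (Finset.univ : Finset α), s(x, f x) ∈ T :=
    fun x _ => Finset.mem_image.mpr ⟨x, Finset.mem_univ x, rfl⟩
  have hstep2 : ∏ x : α, W (s(x, f x)) = ∏ e ∈ T, W e ^ 2 := by
    rw [← Finset.prod_fiberwise_of_maps_to hmaps (fun x => W (s(x, f x)))]
    refine Finset.prod_congr rfl fun e he => ?_
    obtain ⟨y, -, rfl⟩ := Finset.mem_image.mp he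
    have : ∀ x ∈ Finset.univ.filter (fun x => s(x, f x) = s(y, f y)),
        W (s(x, f x)) = W (s(y, f y)) := by
      intro x hx
      rw [Finset.mem_filter] at hx
      rw [hx.2]
    rw [Finset.prod_congr rfl this, Finset.prod_const, hfiber y]
    have hcard : ({y, f y} : Finset α).card = 2 := by
      rw [Finset.card_insert_of_notMem (by simp [(hff y).symm, Ne.symm]), Finset.card_singleton]
    rw [hcard]
  have hWx : ∀ x : α, W (s(x, f x)) = if x ∈ A then p else 1 - p := by
    intro x
    rw [hW]
    by_cases hx : x ∈ A
    · simp only [if_pos hx]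
      rw [if_pos ((hchi x).mpr hx)]
    · simp only [if_neg hx]
      have : χ (s(x, f x)) = false := by
        rcases Bool.dichotomy (χ (s(x, f x))) with h | h
        · exact h
        · exact absurd ((hchi x).mp h) hx
      rw [this]
      simp
  calc (∏ e ∈ T, W e) ^ 2 = ∏ e ∈ T, W e ^ 2 := by rw [← Finset.prod_pow]
    _ = ∏ x : α, W (s(x, f x)) := hstep2.symm
    _ = ∏ x : α, (if x ∈ A then p else 1 - p) := Finset.prod_congr rfl fun x _ => hWx x

lemma inv_compl_mapsto {A : Finset α} {f : α → α} (hf : Function.Involutive f)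
    (hfA : ∀ x ∈ A, f x ∈ A) : ∀ x ∉ A, f x ∉ A := by
  intro x hx hfx
  exact hx (hf x ▸ hfA (f x) hfx)

lemma inv_compl_mapsto' {A : Finset α} {m0 : α → α} {f : α → α} (hf : Function.Involutive f)
    (hm0 : ∀ x ∈ A, m0 x ∈ A ∧ m0 x ≠ x ∧ m0 (m0 x) = x)
    (hfm : ∀ x ∈ A, f x = m0 x) : ∀ x ∉ A, f x ∉ A := by
  refine inv_compl_mapsto hf fun x hx => ?_
  rw [hfm x hx]
  exact (hm0 x hx).1

noncomputable def splitEquiv (A : Finset α) (m0 : α → α)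
    (hm0 : ∀ x ∈ A, m0 x ∈ A ∧ m0 x ≠ x ∧ m0 (m0 x) = x) :
    {f : α → α // (Function.Involutive f ∧ ∀ x, f x ≠ x) ∧ ∀ x ∈ A, f x ∈ A} ≃
      {m : α → α // PM A m} ×
        {f : α → α // (Function.Involutive f ∧ ∀ x, f x ≠ x) ∧ ∀ x ∈ A, f x = m0 x} where
  toFun f := ⟨⟨fun x => if x ∈ A then f.1 x else x, by
      obtain ⟨f, ⟨hinv, hfpf⟩, hfA⟩ := f
      constructor
      · intro x hx
        have h1 : f x ∈ A := hfA x hx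
        simp only [if_pos hx, if_pos h1]
        exact ⟨h1, hfpf x, hinv x⟩
      · intro x hx
        simp only [if_neg hx]⟩,
    ⟨fun x => if x ∈ A then m0 x else f.1 x, by
      obtain ⟨f, ⟨hinv, hfpf⟩, hfA⟩ := f
      have hco := inv_compl_mapsto hinv hfA
      refine ⟨⟨?_, ?_⟩, fun x hx => if_pos hx⟩
      · intro x
        by_cases hx : x ∈ A
        · simp only [if_pos hx, if_pos (hm0 x hx).1]
          exact (hm0 x hx).2.2
        · simp only [if_neg hx, if_neg (hco x hx)]
          exact hinv x
      · intro x
        by_cases hx : x ∈ A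
        · simp only [if_pos hx]
          exact (hm0 x hx).2.1
        · simp only [if_neg hx]
          exact hfpf x⟩⟩
  invFun q := ⟨fun x => if x ∈ A then q.1.1 x else q.2.1 x, by
    obtain ⟨⟨m, hm⟩, ⟨f0, ⟨hinv, hfpf⟩, hfm⟩⟩ := q
    have hco := inv_compl_mapsto' hinv hm0 hfm
    refine ⟨⟨?_, ?_⟩, ?_⟩
    · intro x
      by_cases hx : x ∈ A
      · simp only [if_pos hx, if_pos (hm.1 x hx).1]
        exact (hm.1 x hx).2.2
      · simp only [if_neg hx, if_neg (hco x hx)]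
        exact hinv x
    · intro x
      by_cases hx : x ∈ A
      · simp only [if_pos hx]
        exact (hm.1 x hx).2.1
      · simp only [if_neg hx]
        exact hfpf x
    · intro x hx
      simp only [if_pos hx]
      exact (hm.1 x hx).1⟩
  left_inv := by
    rintro ⟨f, ⟨hinv, hfpf⟩, hfA⟩
    apply Subtype.ext
    funext x
    by_cases hx : x ∈ A <;> simp [hx]
  right_inv := by
    rintro ⟨⟨m, hm⟩, ⟨f0, ⟨hinv, hfpf⟩, hfm⟩⟩
    have hco := inv_compl_mapsto' hinv hm0 hfm
    refine Prod.ext (Subtype.ext ?_) (Subtype.ext ?_)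
    · funext x
      by_cases hx : x ∈ A
      · simp only [if_pos hx]
      · simp only [if_neg hx]
        exact (hm.2 x hx).symm
    · funext x
      by_cases hx : x ∈ A
      · simp only [if_pos hx]
        exact (hfm x hx).symm
      · simp only [if_neg hx]

lemma exists_fpf_extension (M k : ℕ) (hcard : Fintype.card α = 2 * M) (hk : k ≤ M)
    (A : Finset α) (hA : A.card = 2 * k) (m0 : α → α)
    (hm0 : ∀ x ∈ A, m0 x ∈ A ∧ m0 x ≠ x ∧ m0 (m0 x) = x) :
    ∃ f : α → α, (Function.Involutive f ∧ ∀ x, f x ≠ x) ∧ ∀ x ∈ A, f x = m0 x := by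
  have hcardc : Fintype.card {x : α // x ∉ A} = Fintype.card (Fin (M - k) × Fin 2) := by
    rw [Fintype.card_subtype]
    have h1 : Finset.univ.filter (fun x : α => x ∉ A) = Aᶜ := by
      ext x; simp
    rw [h1, Finset.card_compl, hA, hcard, Fintype.card_prod, Fintype.card_fin, Fintype.card_fin]
    omega
  set e := Fintype.equivOfCardEq hcardc with he
  have ht : ∀ j : Fin 2, (1 : Fin 2) - (1 - j) = j := by decide
  have ht2 : ∀ j : Fin 2, (1 : Fin 2) - j ≠ j := by decide
  refine ⟨fun x => if h : x ∈ A then m0 x else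
    (e.symm ((e ⟨x, h⟩).1, 1 - (e ⟨x, h⟩).2)).1, ⟨?_, ?_⟩, ?_⟩
  · intro x
    by_cases hx : x ∈ A
    · simp only [dif_pos hx, dif_pos (hm0 x hx).1]
      exact (hm0 x hx).2.2
    · simp only [dif_neg hx]
      set y := e.symm ((e ⟨x, hx⟩).1, 1 - (e ⟨x, hx⟩).2) with hy
      rw [dif_neg y.2]
      have hyy : (⟨y.1, y.2⟩ : {x : α // x ∉ A}) = y := rfl
      rw [hyy, hy, Equiv.apply_symm_apply]
      simp only [ht]
      have : ((e ⟨x, hx⟩).1, (e ⟨x, hx⟩).2) = e ⟨x, hx⟩ := rfl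
      rw [this, Equiv.symm_apply_apply]
  · intro x
    by_cases hx : x ∈ A
    · simp only [dif_pos hx]
      exact (hm0 x hx).2.1
    · simp only [dif_neg hx]
      intro hcontra
      set y := e.symm ((e ⟨x, hx⟩).1, 1 - (e ⟨x, hx⟩).2) with hy
      have hyx : y = ⟨x, hx⟩ := Subtype.ext hcontra
      have := congrArg e hyx
      rw [hy, Equiv.apply_symm_apply] at this
      have h2 := congrArg Prod.snd this
      exact ht2 (e ⟨x, hx⟩).2 h2
  · intro x hx
    simp only [dif_pos hx]

end Aux

/-- Conditional on the set `C = A` of surviving points (`|A| = 2k`) after independent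
edge-deletion from a uniformly random perfect matching on `2M` points, the perfect matching
realised on the surviving points is uniform: for any fixed perfect matching `m0` on `A`,
the conditional probability that the surviving matching agrees with `m0` on `A` is
`k!·2^k/(2k)!`. -/
theorem stmt3 {α : Type*} [Fintype α] [DecidableEq α] (M k : ℕ)
    (hcard : Fintype.card α = 2 * M) (hk : k ≤ M)
    (p : ℝ) (hp : p ∈ Set.Ioo (0 : ℝ) 1)
    (A : Finset α) (hA : A.card = 2 * k)
    (m0 : α → α)
    (hm0 : ∀ x ∈ A, m0 x ∈ A ∧ m0 x ≠ x ∧ m0 (m0 x) = x) :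
    (∑ f : {f : α → α // Function.Involutive f ∧ ∀ x, f x ≠ x},
        ∑ g : Sym2 α → Bool,
          edgeWeight p g *
            (if survivors f.1 g = A ∧ ∀ x ∈ A, f.1 x = m0 x then 1 else 0)) /
    (∑ f : {f : α → α // Function.Involutive f ∧ ∀ x, f x ≠ x},
        ∑ g : Sym2 α → Bool,
          edgeWeight p g * (if survivors f.1 g = A then 1 else 0))
    = (k.factorial * 2 ^ k : ℝ) / ((2 * k).factorial : ℝ) := by
  classical
  set S := {f : α → α // Function.Involutive f ∧ ∀ x, f x ≠ x} with hS
  set Q0 : ℝ := ∏ x : α, (if x ∈ A then p else 1 - p) with hQ0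
  have hQ0pos : 0 < Q0 := by
    refine Finset.prod_pos fun x _ => ?_
    by_cases hx : x ∈ A
    · simpa [hx] using hp.1
    · have := hp.2
      simp only [if_neg hx]
      linarith
  set c : ℝ := Real.sqrt Q0 with hc
  have hcpos : 0 < c := Real.sqrt_pos.mpr hQ0pos
  -- value of the inner sum for admissible f
  have hSval : ∀ f : α → α, Function.Involutive f → (∀ x, f x ≠ x) → (∀ x ∈ A, f x ∈ A) →
      (∑ g : Sym2 α → Bool, edgeWeight p g * (if survivors f g = A then 1 else 0)) = c := by
    intro f hinv hfpf hfA
    have hnn : 0 ≤ ∑ g : Sym2 α → Bool, edgeWeight p g * (if survivors f g = A then 1 else 0) := by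
      refine Finset.sum_nonneg fun g _ => mul_nonneg (edgeWeight_nonneg hp g) ?_
      split <;> norm_num
    rw [← Real.sqrt_sq hnn, sval_sq hinv hfpf hfA, hc, hQ0]
  have hSzero : ∀ f : α → α, Function.Involutive f → ¬(∀ x ∈ A, f x ∈ A) →
      (∑ g : Sym2 α → Bool, edgeWeight p g * (if survivors f g = A then 1 else 0)) = 0 := by
    intro f hinv hnot
    refine Finset.sum_eq_zero fun g _ => ?_
    have h : survivors f g ≠ A := fun h => hnot (survivors_mapsto hinv h)
    rw [if_neg h, mul_zero]
  -- numerator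
  have hnum : (∑ f : S, ∑ g : Sym2 α → Bool,
        edgeWeight p g * (if survivors f.1 g = A ∧ ∀ x ∈ A, f.1 x = m0 x then 1 else 0))
      = c * ((Finset.univ.filter (fun f : S => ∀ x ∈ A, f.1 x = m0 x)).card : ℝ) := by
    calc (∑ f : S, ∑ g : Sym2 α → Bool,
          edgeWeight p g * (if survivors f.1 g = A ∧ ∀ x ∈ A, f.1 x = m0 x then 1 else 0))
        = ∑ f : S, (if (∀ x ∈ A, f.1 x = m0 x) then c else 0) := by
          refine Finset.sum_congr rfl fun f _ => ?_
          by_cases hQ : ∀ x ∈ A, f.1 x = m0 x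
          · rw [if_pos hQ]
            have hfA : ∀ x ∈ A, f.1 x ∈ A := fun x hx => (hQ x hx) ▸ (hm0 x hx).1
            rw [← hSval f.1 f.2.1 f.2.2 hfA]
            refine Finset.sum_congr rfl fun g _ => ?_
            congr 1
            by_cases hP : survivors f.1 g = A
            · rw [if_pos ⟨hP, hQ⟩, if_pos hP]
            · rw [if_neg (fun h => hP h.1), if_neg hP]
          · rw [if_neg hQ]
            refine Finset.sum_eq_zero fun g _ => ?_
            rw [if_neg (fun h => hQ h.2), mul_zero]
      _ = ∑ f : S, c * (if (∀ x ∈ A, f.1 x = m0 x) then (1:ℝ) else 0) := by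
          refine Finset.sum_congr rfl fun f _ => ?_
          rw [mul_ite, mul_one, mul_zero]
      _ = c * ∑ f : S, (if (∀ x ∈ A, f.1 x = m0 x) then (1:ℝ) else 0) := by
          rw [← Finset.mul_sum]
      _ = c * ((Finset.univ.filter (fun f : S => ∀ x ∈ A, f.1 x = m0 x)).card : ℝ) := by
          rw [Finset.sum_boole]
  -- denominator
  have hden : (∑ f : S, ∑ g : Sym2 α → Bool,
        edgeWeight p g * (if survivors f.1 g = A then 1 else 0))
      = c * ((Finset.univ.filter (fun f : S => ∀ x ∈ A, f.1 x ∈ A)).card : ℝ) := by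
    calc (∑ f : S, ∑ g : Sym2 α → Bool,
          edgeWeight p g * (if survivors f.1 g = A then 1 else 0))
        = ∑ f : S, (if (∀ x ∈ A, f.1 x ∈ A) then c else 0) := by
          refine Finset.sum_congr rfl fun f _ => ?_
          by_cases hR : ∀ x ∈ A, f.1 x ∈ A
          · rw [if_pos hR, hSval f.1 f.2.1 f.2.2 hR]
          · rw [if_neg hR, hSzero f.1 f.2.1 hR]
      _ = ∑ f : S, c * (if (∀ x ∈ A, f.1 x ∈ A) then (1:ℝ) else 0) := by
          refine Finset.sum_congr rfl fun f _ => ?_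
          rw [mul_ite, mul_one, mul_zero]
      _ = c * ∑ f : S, (if (∀ x ∈ A, f.1 x ∈ A) then (1:ℝ) else 0) := by
          rw [← Finset.mul_sum]
      _ = c * ((Finset.univ.filter (fun f : S => ∀ x ∈ A, f.1 x ∈ A)).card : ℝ) := by
          rw [Finset.sum_boole]
  -- counting
  have hcount : (Finset.univ.filter (fun f : S => ∀ x ∈ A, f.1 x ∈ A)).card
      = matchCount A * (Finset.univ.filter (fun f : S => ∀ x ∈ A, f.1 x = m0 x)).card := by
    rw [← Fintype.card_subtype, ← Fintype.card_subtype]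
    have e1 : {f : S // ∀ x ∈ A, f.1 x ∈ A} ≃
        {f : α → α // (Function.Involutive f ∧ ∀ x, f x ≠ x) ∧ ∀ x ∈ A, f x ∈ A} :=
      Equiv.subtypeSubtypeEquivSubtypeInter
        (fun f : α → α => Function.Involutive f ∧ ∀ x, f x ≠ x)
        (fun f : α → α => ∀ x ∈ A, f x ∈ A)
    have e2 : {f : S // ∀ x ∈ A, f.1 x = m0 x} ≃
        {f : α → α // (Function.Involutive f ∧ ∀ x, f x ≠ x) ∧ ∀ x ∈ A, f x = m0 x} :=
      Equiv.subtypeSubtypeEquivSubtypeInter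
        (fun f : α → α => Function.Involutive f ∧ ∀ x, f x ≠ x)
        (fun f : α → α => ∀ x ∈ A, f x = m0 x)
    rw [Fintype.card_congr e1, Fintype.card_congr e2,
      Fintype.card_congr (splitEquiv A m0 hm0), Fintype.card_prod, matchCount]
  have hn0pos : 0 < (Finset.univ.filter (fun f : S => ∀ x ∈ A, f.1 x = m0 x)).card := by
    obtain ⟨f0, hf01, hf02⟩ := exists_fpf_extension M k hcard hk A hA m0 hm0
    exact Finset.card_pos.mpr ⟨⟨f0, hf01⟩, Finset.mem_filter.mpr ⟨Finset.mem_univ _, hf02⟩⟩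
  have hNfact : matchCount A * (k.factorial * 2 ^ k) = (2 * k).factorial :=
    matchCount_spec k A hA
  have hNpos : 0 < matchCount A := Nat.pos_of_ne_zero fun h => by
    rw [h, zero_mul] at hNfact
    exact absurd hNfact.symm (Nat.factorial_pos _).ne'
  -- final arithmetic
  rw [hnum, hden, hcount]
  set n0 : ℕ := (Finset.univ.filter (fun f : S => ∀ x ∈ A, f.1 x = m0 x)).card with hn0
  set N : ℕ := matchCount A with hN
  have hfactR : ((2 * k).factorial : ℝ) = (N : ℝ) * ((k.factorial : ℝ) * 2 ^ k) := by
    rw [← hNfact]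
    push_cast
    ring
  have hNR : (0:ℝ) < (N : ℝ) := by exact_mod_cast hNpos
  have hn0R : (0:ℝ) < (n0 : ℝ) := by exact_mod_cast hn0pos
  have hd1 : c * ((N * n0 : ℕ) : ℝ) ≠ 0 := by
    push_cast
    exact ne_of_gt (mul_pos hcpos (mul_pos hNR hn0R))
  have hd2 : ((2 * k).factorial : ℝ) ≠ 0 := by positivity
  rw [div_eq_div_iff hd1 hd2, hfactR]
  push_cast
  ring
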